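/- Every element of the subalgebra A of Γ = F[x,y]/(x² + y⁴ − 1) generated by 1, y², xy can be written as f(y) + xy·g(y) where f and g are polynomials in y²; equivalently, the elements 1, y^{2i}, x·y^{2i−1} (i ≥ 1) span A over F. -/
import Mathlib


set_option synthInstance.maxHeartbeats 400000

open MvPolynomial

/-- The quotient ring `Γ = F[x,y]/(x² + y⁴ − 1)`. -/
abbrev Gam (F : Type*) [Field F] : Type _ :=
  MvPolynomial (Fin 2) F ⧸
    Ideal.span {(X 0 ^ 2 + X 1 ^ 4 - 1 : MvPolynomial (Fin 2) F)}

/-- The image of `x` in `Γ`. -/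
noncomputable abbrev xG (F : Type*) [Field F] : Gam F := Ideal.Quotient.mk _ (X 0)

/-- The image of `y` in `Γ`. -/
noncomputable abbrev yG (F : Type*) [Field F] : Gam F := Ideal.Quotient.mk _ (X 1)

/-- Every element of the subalgebra `A` of `Γ` generated by `1`, `y²`, `xy` can
be written as `f(y) + xy·g(y)` with `f, g` polynomials in `y²`. -/
theorem stmt9 (F : Type*) [Field F] [CharZero F]
    (a : Gam F) (ha : a ∈ Algebra.adjoin F ({yG F ^ 2, xG F * yG F} : Set (Gam F))) :
    ∃ f g : Polynomial F,
      a = Polynomial.aeval (yG F) (f.comp (Polynomial.X ^ 2)) +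
          xG F * yG F * Polynomial.aeval (yG F) (g.comp (Polynomial.X ^ 2)) := by
  have hx2 : xG F ^ 2 = 1 - yG F ^ 4 := by
    have h0 : (Ideal.Quotient.mk _ (X 0 ^ 2 + X 1 ^ 4 - 1 : MvPolynomial (Fin 2) F)) =
        (0 : Gam F) :=
      Ideal.Quotient.eq_zero_iff_mem.2 (Ideal.subset_span rfl)
    rw [map_sub, map_add, map_pow, map_pow, map_one] at h0
    linear_combination h0
  set u : Gam F := yG F ^ 2 with hu
  set t : Gam F := xG F * yG F with htdef
  have key : ∀ p : Polynomial F,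
      Polynomial.aeval (yG F) (p.comp (Polynomial.X ^ 2)) = Polynomial.aeval u p := by
    intro p
    rw [Polynomial.aeval_comp]
    simp [hu]
  have ht2 : t ^ 2 = u - u ^ 3 := by
    rw [htdef, hu]
    linear_combination (yG F ^ 2) * hx2
  suffices h : ∃ f g : Polynomial F, a = Polynomial.aeval u f + t * Polynomial.aeval u g by
    obtain ⟨f, g, h⟩ := h
    exact ⟨f, g, by rw [key, key]; exact h⟩
  induction ha using Algebra.adjoin_induction with
  | mem z hz =>
    rcases hz with h | h
    · exact ⟨Polynomial.X, 0, by simp [h]⟩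
    · rw [Set.mem_singleton_iff] at h; exact ⟨0, 1, by simp [h, htdef]⟩
  | algebraMap r => exact ⟨Polynomial.C r, 0, by simp⟩
  | add p q hp hq ihp ihq =>
    obtain ⟨f1, g1, e1⟩ := ihp
    obtain ⟨f2, g2, e2⟩ := ihq
    exact ⟨f1 + f2, g1 + g2, by rw [e1, e2, map_add, map_add]; ring⟩
  | mul p q hp hq ihp ihq =>
    obtain ⟨f1, g1, e1⟩ := ihp
    obtain ⟨f2, g2, e2⟩ := ihq
    refine ⟨f1 * f2 + (Polynomial.X - Polynomial.X ^ 3) * (g1 * g2),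
      f1 * g2 + f2 * g1, ?_⟩
    rw [e1, e2]
    simp only [map_add, map_mul, map_sub, map_pow, Polynomial.aeval_X]
    linear_combination (Polynomial.aeval u g1 * Polynomial.aeval u g2) * ht2
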